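/- Let K be a σ-henselian valued difference field satisfying Axiom 4, and let (G, a) be in σ-hensel configuration, where G is a σ-polynomial over K and a ∈ K. Then there is b ∈ K such that G(b) = 0 and v(a − b) = γ(G, a). -/

import Mathlib

/-!
Common definitions: three-sorted valued (difference) fields, σ-polynomials,
pc-sequences, axioms from the paper.
-/

namespace VDFPaper

universe u v w

/-- A valued field, presented as a three-sorted structure `(K, Γ, k; v, π)`.
The valuation is extended to `v : K → WithTop Γ` with `v 0 = ⊤`, and the residue
map `π : O → k` is extended to all of `K` by `0` outside the valuation ring. -/
structure ValuedField (K : Type u) (Γ : Type v) (k : Type w)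
    [Field K] [AddCommGroup Γ] [LinearOrder Γ] [IsOrderedAddMonoid Γ] [Field k] where
  v : K → WithTop Γ
  π : K → k
  v_top_iff : ∀ a : K, v a = ⊤ ↔ a = 0
  v_mul : ∀ a b : K, v (a * b) = v a + v b
  v_add : ∀ a b : K, min (v a) (v b) ≤ v (a + b)
  v_surj : ∀ γ : Γ, ∃ a : K, v a = (γ : WithTop Γ)
  π_add : ∀ a b : K, 0 ≤ v a → 0 ≤ v b → π (a + b) = π a + π b
  π_mul : ∀ a b : K, 0 ≤ v a → 0 ≤ v b → π (a * b) = π a * π b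
  π_one : π 1 = 1
  π_surj : Function.Surjective π
  π_eq_zero_iff : ∀ a : K, 0 ≤ v a → (π a = 0 ↔ 0 < v a)
  π_junk : ∀ a : K, ¬ 0 ≤ v a → π a = 0

/-- A valued difference field (satisfying Axiom 1: `v (σ a) = v a`);
`σr` is the induced automorphism of the residue field. -/
structure ValuedDiffField (K : Type u) (Γ : Type v) (k : Type w)
    [Field K] [AddCommGroup Γ] [LinearOrder Γ] [IsOrderedAddMonoid Γ] [Field k]
    extends ValuedField K Γ k where
  σ : K ≃+* K
  σr : k ≃+* k
  v_σ : ∀ a : K, v (σ a) = v a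
  π_σ : ∀ a : K, π (σ a) = σr (π a)

/-- `iterEquiv s m` is the `m`-th iterate (`m : ℤ`) of the automorphism `s`. -/
def iterEquiv {R : Type*} [Mul R] [Add R] (s : R ≃+* R) : ℤ → R → R
  | Int.ofNat m => (⇑s)^[m]
  | Int.negSucc m => (⇑s.symm)^[m + 1]

/-- Evaluation of the σ-polynomial `f(x, σ x, …, σⁿ x)` at `a`. -/
noncomputable def evalDiff {R : Type*} [CommSemiring R] (s : R → R) {n : ℕ}
    (f : MvPolynomial (Fin (n + 1)) R) (a : R) : R :=
  MvPolynomial.eval (fun i : Fin (n + 1) => s^[(i : ℕ)] a) f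

/-- The Taylor coefficient `f_(i)` (Hasse derivative), characterized by
`f(x+y) = Σ_i f_(i)(x) · y^i`. -/
noncomputable def taylorCoeff {R : Type*} [CommRing R] {n : ℕ}
    (i : Fin (n + 1) →₀ ℕ) (f : MvPolynomial (Fin (n + 1)) R) :
    MvPolynomial (Fin (n + 1)) R :=
  ∑ d ∈ f.support,
    MvPolynomial.monomial (d - i)
      ((∏ j ∈ d.support ∪ i.support, ((d j).choose (i j) : R)) * f.coeff d)

/-- Apply a (not necessarily ring-hom) map to all coefficients; used for
reduction of σ-polynomials over the valuation ring to the residue field. -/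
noncomputable def mapCoeffs {R S : Type*} [CommSemiring R] [CommSemiring S]
    (π : R → S) {n : ℕ} (f : MvPolynomial (Fin (n + 1)) R) :
    MvPolynomial (Fin (n + 1)) S :=
  ∑ d ∈ f.support, MvPolynomial.monomial d (π (f.coeff d))

/-- `|j| = j₀ + ⋯ + jₙ` for a multi-index. -/
def degSum {n : ℕ} (j : Fin (n + 1) →₀ ℕ) : ℕ := j.sum fun _ e => e

/-- The order of a σ-polynomial: the largest `i` such that `σ^i x` occurs. -/
def sigmaOrder {R : Type*} [CommSemiring R] {n : ℕ}
    (f : MvPolynomial (Fin (n + 1)) R) : ℕ :=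
  f.support.sup fun d => d.support.sup fun j => (j : ℕ)

lemma sigmaOrder_le {R : Type*} [CommSemiring R] {n : ℕ}
    (f : MvPolynomial (Fin (n + 1)) R) : sigmaOrder f ≤ n :=
  Finset.sup_le fun d _ => Finset.sup_le fun j _ => Nat.lt_succ_iff.mp j.isLt

/-- Complexity of a σ-polynomial: `(order + 1, degree in σ^order x, total degree)`
for nonconstant ones, `(0,0,0)` for constants (so constants are of lower
complexity than all nonconstant σ-polynomials, as in the paper). -/
noncomputable def sigmaComplexity {R : Type*} [CommSemiring R] {n : ℕ}
    (f : MvPolynomial (Fin (n + 1)) R) : ℕ × ℕ × ℕ :=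
  if f.totalDegree = 0 then (0, 0, 0)
  else (sigmaOrder f + 1,
    MvPolynomial.degreeOf (⟨sigmaOrder f, Nat.lt_succ_of_le (sigmaOrder_le f)⟩ : Fin (n + 1)) f,
    f.totalDegree)

/-- Lexicographic order on complexities. -/
def TripleLT (a b : ℕ × ℕ × ℕ) : Prop :=
  a.1 < b.1 ∨ (a.1 = b.1 ∧ (a.2.1 < b.2.1 ∨ (a.2.1 = b.2.1 ∧ a.2.2 < b.2.2)))

/-- `α` is σ-transcendental over the difference subfield given by `φ : E →+* F`,
where `s` is the difference operator of `F`. -/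
def SigmaTranscendentalOver {E F : Type*} [Field E] [Field F]
    (φ : E →+* F) (s : F → F) (α : F) : Prop :=
  ∀ (n : ℕ) (f : MvPolynomial (Fin (n + 1)) E), f ≠ 0 →
    evalDiff s (MvPolynomial.map φ f) α ≠ 0

/-- `g` is a minimal σ-polynomial of `α` over the difference subfield `φ : E →+* F`. -/
def IsMinimalSigmaPolyOver {E F : Type*} [Field E] [Field F]
    (φ : E →+* F) (s : F → F) {n : ℕ} (g : MvPolynomial (Fin (n + 1)) E) (α : F) : Prop :=
  g ≠ 0 ∧ evalDiff s (MvPolynomial.map φ g) α = 0 ∧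
    ∀ (m : ℕ) (h : MvPolynomial (Fin (m + 1)) E), h ≠ 0 →
      TripleLT (sigmaComplexity h) (sigmaComplexity g) →
      evalDiff s (MvPolynomial.map φ h) α ≠ 0

/-- The difference subfield `E⟨a⟩` generated over `S = E` by `a`:
the subfield generated by `S` together with all `σ^m a`, `m : ℤ`. -/
def genDiffSubfield {F : Type*} [Field F] (s : F ≃+* F) (S : Set F) (a : F) : Subfield F :=
  Subfield.closure (S ∪ Set.range fun m : ℤ => iterEquiv s m a)

/-- An embedding of valued fields (three-sorted). -/
structure ValEmbedding {K₁ Γ₁ k₁ K₂ Γ₂ k₂ : Type*}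
    [Field K₁] [AddCommGroup Γ₁] [LinearOrder Γ₁] [IsOrderedAddMonoid Γ₁] [Field k₁]
    [Field K₂] [AddCommGroup Γ₂] [LinearOrder Γ₂] [IsOrderedAddMonoid Γ₂] [Field k₂]
    (M₁ : ValuedField K₁ Γ₁ k₁) (M₂ : ValuedField K₂ Γ₂ k₂) where
  toField : K₁ →+* K₂
  toGroup : Γ₁ → Γ₂
  toGroup_add : ∀ x y : Γ₁, toGroup (x + y) = toGroup x + toGroup y
  toGroup_mono : StrictMono toGroup
  comm_v : ∀ a : K₁, M₂.v (toField a) = WithTop.map toGroup (M₁.v a)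
  toRes : k₁ →+* k₂
  comm_π : ∀ a : K₁, 0 ≤ M₁.v a → M₂.π (toField a) = toRes (M₁.π a)

/-- An embedding (extension) of valued difference fields. -/
structure VDFEmbedding {K₁ Γ₁ k₁ K₂ Γ₂ k₂ : Type*}
    [Field K₁] [AddCommGroup Γ₁] [LinearOrder Γ₁] [IsOrderedAddMonoid Γ₁] [Field k₁]
    [Field K₂] [AddCommGroup Γ₂] [LinearOrder Γ₂] [IsOrderedAddMonoid Γ₂] [Field k₂]
    (M₁ : ValuedDiffField K₁ Γ₁ k₁) (M₂ : ValuedDiffField K₂ Γ₂ k₂)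
    extends ValEmbedding M₁.toValuedField M₂.toValuedField where
  comm_σ : ∀ a : K₁, toField (M₁.σ a) = M₂.σ (toField a)

/-- An extension is immediate if it induces bijections on value groups and residue fields. -/
def ValEmbedding.IsImmediate {K₁ Γ₁ k₁ K₂ Γ₂ k₂ : Type*}
    [Field K₁] [AddCommGroup Γ₁] [LinearOrder Γ₁] [IsOrderedAddMonoid Γ₁] [Field k₁]
    [Field K₂] [AddCommGroup Γ₂] [LinearOrder Γ₂] [IsOrderedAddMonoid Γ₂] [Field k₂]
    {M₁ : ValuedField K₁ Γ₁ k₁} {M₂ : ValuedField K₂ Γ₂ k₂}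
    (E : ValEmbedding M₁ M₂) : Prop :=
  Function.Surjective E.toGroup ∧ Function.Surjective E.toRes

def VDFEmbedding.IsImmediate {K₁ Γ₁ k₁ K₂ Γ₂ k₂ : Type*}
    [Field K₁] [AddCommGroup Γ₁] [LinearOrder Γ₁] [IsOrderedAddMonoid Γ₁] [Field k₁]
    [Field K₂] [AddCommGroup Γ₂] [LinearOrder Γ₂] [IsOrderedAddMonoid Γ₂] [Field k₂]
    {M₁ : ValuedDiffField K₁ Γ₁ k₁} {M₂ : ValuedDiffField K₂ Γ₂ k₂}
    (E : VDFEmbedding M₁ M₂) : Prop :=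
  E.toValEmbedding.IsImmediate

section Pc

variable {K : Type u} {Γ : Type v} {k : Type w}
variable [Field K] [AddCommGroup Γ] [LinearOrder Γ] [IsOrderedAddMonoid Γ] [Field k]

/-- A pc-sequence (pseudo-Cauchy sequence). The index type is assumed to be a
nonempty well-ordered set without greatest element where this matters. -/
def IsPcSeq {I : Type*} [LinearOrder I] (v : K → WithTop Γ) (a : I → K) : Prop :=
  ∃ ρ₀ : I, ∀ ρ ρ' ρ'' : I, ρ₀ ≤ ρ → ρ < ρ' → ρ' < ρ'' →
    v (a ρ' - a ρ) < v (a ρ'' - a ρ')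

/-- `a_ρ ⤳ x` : the sequence `a` pseudoconverges to `x`, i.e. `v (x - a_ρ)` is
eventually strictly increasing. -/
def PseudoLim {I : Type*} [LinearOrder I] (v : K → WithTop Γ) (a : I → K) (x : K) : Prop :=
  ∃ ρ₀ : I, ∀ ρ ρ' : I, ρ₀ ≤ ρ → ρ < ρ' → v (x - a ρ) < v (x - a ρ')

/-- Two pc-sequences are equivalent: they have the same pseudolimits in every
valued field extension. -/
def PcEquiv (M : ValuedField K Γ k) {I : Type*} [LinearOrder I] (a b : I → K) : Prop :=
  ∀ (K' : Type u) (Γ' : Type v) (k' : Type w)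
    [Field K'] [AddCommGroup Γ'] [LinearOrder Γ'] [IsOrderedAddMonoid Γ'] [Field k']
    (M' : ValuedField K' Γ' k') (E : ValEmbedding M M') (x : K'),
    PseudoLim M'.v (fun ρ => E.toField (a ρ)) x ↔
    PseudoLim M'.v (fun ρ => E.toField (b ρ)) x

end Pc

section Axioms

variable {K : Type u} {Γ : Type v} {k : Type w}
variable [Field K] [AddCommGroup Γ] [LinearOrder Γ] [IsOrderedAddMonoid Γ] [Field k]

/-- Axiom 2: every value is the value of an element of the fixed field. -/
def Axiom2 (M : ValuedDiffField K Γ k) : Prop :=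
  ∀ γ : Γ, ∃ a : K, M.σ a = a ∧ M.v a = (γ : WithTop Γ)

/-- Axiom 3 (a scheme about the residue difference field). -/
def Axiom3 (M : ValuedDiffField K Γ k) : Prop :=
  (∀ d : ℕ, 0 < d → ∃ y : k, (⇑M.σr)^[d] y ≠ y) ∧
  (∀ p : ℕ, p.Prime → ringChar k = p →
    ∀ d : ℤ, d ≠ 0 → ∀ e : ℕ, 0 < e → ∃ y : k, iterEquiv M.σr d y ≠ y ^ p ^ e)

/-- Axiom 4ₙ: solvability in the residue field of inhomogeneous linear
σ̄-equations of order ≤ n. -/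
def Axiom4n (M : ValuedDiffField K Γ k) (n : ℕ) : Prop :=
  ∀ α : Fin (n + 1) → k, (∃ i, α i ≠ 0) →
    ∃ y : k, 1 + ∑ i : Fin (n + 1), α i * (⇑M.σr)^[(i : ℕ)] y = 0

def Axiom4 (M : ValuedDiffField K Γ k) : Prop := ∀ n : ℕ, Axiom4n M n

/-- The Witt case for the prime `p`. -/
def WittCase (M : ValuedDiffField K Γ k) (p : ℕ) : Prop :=
  p.Prime ∧ ringChar K = 0 ∧ ringChar k = p ∧ PerfectField k ∧
  (∃ e : Γ, 0 < e ∧ (∀ γ : Γ, 0 < γ → e ≤ γ) ∧ M.v (p : K) = (e : WithTop Γ)) ∧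
  ∀ y : k, M.σr y = y ^ p

/-- Finitely ramified valued (difference) field. -/
def FinitelyRamified (M : ValuedDiffField K Γ k) : Prop :=
  ringChar K = 0 ∧ ∀ p : ℕ, p.Prime → ringChar k = p →
    {γ : Γ | 0 < γ ∧ (γ : WithTop Γ) < M.v (p : K)}.Finite

/-- Workable: Axioms 2 and 3, or Axiom 2 and a Witt case with infinite residue field. -/
def Workable (M : ValuedDiffField K Γ k) : Prop :=
  (Axiom2 M ∧ Axiom3 M) ∨ (Axiom2 M ∧ ∃ p : ℕ, WittCase M p ∧ Infinite k)

/-- All coefficients lie in the valuation ring. -/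
def CoeffsInO (M : ValuedField K Γ k) {n : ℕ} (f : MvPolynomial (Fin (n + 1)) K) : Prop :=
  ∀ d : Fin (n + 1) →₀ ℕ, 0 ≤ M.v (f.coeff d)

/-- `min_{|i| = 1} v (G_(i) (a))`. -/
noncomputable def vG1min (M : ValuedDiffField K Γ k) {n : ℕ}
    (f : MvPolynomial (Fin (n + 1)) K) (a : K) : WithTop Γ :=
  Finset.univ.inf fun i : Fin (n + 1) =>
    M.v (evalDiff (⇑M.σ) (taylorCoeff (Finsupp.single i 1) f) a)

/-- `G` is σ-henselian at `a` (with `G` over `O` and `a ∈ O`). -/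
def SigmaHenselAt (M : ValuedDiffField K Γ k) {n : ℕ}
    (f : MvPolynomial (Fin (n + 1)) K) (a : K) : Prop :=
  0 < M.v (evalDiff (⇑M.σ) f a) ∧ vG1min M f a = 0

/-- `K` is σ-henselian. -/
def SigmaHenselian (M : ValuedDiffField K Γ k) : Prop :=
  ∀ (n : ℕ) (f : MvPolynomial (Fin (n + 1)) K), CoeffsInO M.toValuedField f →
    ∀ a : K, 0 ≤ M.v a → SigmaHenselAt M f a →
      ∃ b : K, evalDiff (⇑M.σ) f b = 0 ∧ M.v (evalDiff (⇑M.σ) f a) ≤ M.v (a - b)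

/-- `(G, a)` is in σ-hensel configuration. -/
def HenselConfig (M : ValuedDiffField K Γ k) {n : ℕ}
    (f : MvPolynomial (Fin (n + 1)) K) (a : K) : Prop :=
  (∃ i : Fin (n + 1), evalDiff (⇑M.σ) (taylorCoeff (Finsupp.single i 1) f) a ≠ 0) ∧
  (evalDiff (⇑M.σ) f a = 0 ∨ ∃ γ : Γ,
    M.v (evalDiff (⇑M.σ) f a) = vG1min M f a + (γ : WithTop Γ) ∧
    ∀ j : Fin (n + 1) →₀ ℕ, 1 < degSum j →
      M.v (evalDiff (⇑M.σ) f a) <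
        M.v (evalDiff (⇑M.σ) (taylorCoeff j f) a) + degSum j • (γ : WithTop Γ))

/-- The pc-sequence `a` is of σ-algebraic type over `K`. -/
def OfSigmaAlgebraicType (M : ValuedDiffField K Γ k) {I : Type*} [LinearOrder I]
    (a : I → K) : Prop :=
  ∃ (n : ℕ) (G : MvPolynomial (Fin (n + 1)) K) (b : I → K),
    IsPcSeq M.v b ∧ PcEquiv M.toValuedField a b ∧
    PseudoLim M.v (fun ρ => evalDiff (⇑M.σ) G (b ρ)) 0

/-- The pc-sequence `a` is of σ-transcendental type over `K`. -/
def OfSigmaTranscendentalType (M : ValuedDiffField K Γ k) {I : Type*} [LinearOrder I]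
    (a : I → K) : Prop :=
  ∀ (n : ℕ) (G : MvPolynomial (Fin (n + 1)) K) (b : I → K),
    IsPcSeq M.v b → PcEquiv M.toValuedField a b →
    ¬ PseudoLim M.v (fun ρ => evalDiff (⇑M.σ) G (b ρ)) 0

/-- `G` is a minimal σ-polynomial of the pc-sequence `a` over `K`. -/
def IsMinPolyOfPcSeq (M : ValuedDiffField K Γ k) {I : Type*} [LinearOrder I]
    (a : I → K) {n : ℕ} (G : MvPolynomial (Fin (n + 1)) K) : Prop :=
  (∃ b : I → K, IsPcSeq M.v b ∧ PcEquiv M.toValuedField a b ∧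
    PseudoLim M.v (fun ρ => evalDiff (⇑M.σ) G (b ρ)) 0) ∧
  ∀ (m : ℕ) (H : MvPolynomial (Fin (m + 1)) K),
    TripleLT (sigmaComplexity H) (sigmaComplexity G) →
    ∀ b : I → K, IsPcSeq M.v b → PcEquiv M.toValuedField a b →
      ¬ PseudoLim M.v (fun ρ => evalDiff (⇑M.σ) H (b ρ)) 0

end Axioms

/-- A bundled extension of a valued field (with prescribed value-group and
residue sorts). -/
structure ValuedFieldExt {K : Type u} {Γ : Type v} {k : Type w}
    [Field K] [AddCommGroup Γ] [LinearOrder Γ] [IsOrderedAddMonoid Γ] [Field k]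
    (M : ValuedField K Γ k) (Γ' : Type v) (k' : Type w)
    [AddCommGroup Γ'] [LinearOrder Γ'] [IsOrderedAddMonoid Γ'] [Field k'] where
  carrier : Type u
  [fieldInst : Field carrier]
  str : ValuedField carrier Γ' k'
  emb : ValEmbedding M str

attribute [instance] ValuedFieldExt.fieldInst

/-- A bundled extension of a valued difference field. -/
structure VDFExt {K : Type u} {Γ : Type v} {k : Type w}
    [Field K] [AddCommGroup Γ] [LinearOrder Γ] [IsOrderedAddMonoid Γ] [Field k]
    (M : ValuedDiffField K Γ k) (Γ' : Type v) (k' : Type w)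
    [AddCommGroup Γ'] [LinearOrder Γ'] [IsOrderedAddMonoid Γ'] [Field k'] where
  carrier : Type u
  [fieldInst : Field carrier]
  str : ValuedDiffField carrier Γ' k'
  emb : VDFEmbedding M str

attribute [instance] VDFExt.fieldInst

section Max

variable {K : Type u} {Γ : Type v} {k : Type w}
variable [Field K] [AddCommGroup Γ] [LinearOrder Γ] [IsOrderedAddMonoid Γ] [Field k]

/-- Maximal valued field: no proper immediate valued field extension. -/
def MaximalValuedField (M : ValuedField K Γ k) : Prop :=
  ¬ ∃ Ext : ValuedFieldExt M Γ k,
      Ext.emb.IsImmediate ∧ ¬ Function.Surjective Ext.emb.toField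

/-- Maximal valued difference field: no proper immediate extension. -/
def MaximalVDF (M : ValuedDiffField K Γ k) : Prop :=
  ¬ ∃ Ext : VDFExt M Γ k,
      Ext.emb.IsImmediate ∧ ¬ Function.Surjective Ext.emb.toField

/-- Every element of the extension is σ-algebraic over the ground field. -/
def SigmaAlgebraicExt {Γ' : Type v} {k' : Type w}
    [AddCommGroup Γ'] [LinearOrder Γ'] [IsOrderedAddMonoid Γ'] [Field k']
    {M : ValuedDiffField K Γ k} (Ext : VDFExt M Γ' k') : Prop :=
  ∀ x : Ext.carrier, ∃ (n : ℕ) (f : MvPolynomial (Fin (n + 1)) K), f ≠ 0 ∧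
    evalDiff (⇑Ext.str.σ) (MvPolynomial.map Ext.emb.toField f) x = 0

/-- σ-algebraically maximal: no proper immediate σ-algebraic extension. -/
def SigmaAlgMaximal (M : ValuedDiffField K Γ k) : Prop :=
  ¬ ∃ Ext : VDFExt M Γ k,
      Ext.emb.IsImmediate ∧ SigmaAlgebraicExt Ext ∧
      ¬ Function.Surjective Ext.emb.toField

/-- Complete with a discrete valuation. -/
def CompleteDiscrete (M : ValuedField K Γ k) : Prop :=
  (∃ e : Γ ≃o ℤ, ∀ x y : Γ, e (x + y) = e x + e y) ∧
  ∀ u : ℕ → K,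
    (∀ γ : Γ, ∃ N : ℕ, ∀ m n : ℕ, N ≤ m → N ≤ n → m ≠ n →
      (γ : WithTop Γ) < M.v (u m - u n)) →
    ∃ x : K, ∀ γ : Γ, ∃ N : ℕ, ∀ n : ℕ, N ≤ n → (γ : WithTop Γ) < M.v (x - u n)

end Max

/-- `g` is an isomorphism of difference fields `A → A'` over `E`
(via `φ : E → F`, `φ' : E → F'`) sending `a` to `b`; `s, s'` are the difference
operators of the ambient fields. -/
def IsDiffIsoOver {E F F' : Type*} [Field E] [Field F] [Field F']
    (φ : E →+* F) (φ' : E →+* F') (s : F → F) (s' : F' → F')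
    (A : Subfield F) (A' : Subfield F') (a : F) (b : F') (g : A →+* F') : Prop :=
  (Set.range fun x : A => g x) = (A' : Set F') ∧
  (∀ (e : E) (he : φ e ∈ A), g ⟨φ e, he⟩ = φ' e) ∧
  (∀ ha : a ∈ A, g ⟨a, ha⟩ = b) ∧
  (∀ (x : A) (hx : s (x : F) ∈ A), g ⟨s (x : F), hx⟩ = s' (g x))

/-- As `IsDiffIsoOver`, and moreover valuation-preserving. -/
def IsValDiffIsoOver {E F F' : Type*} {Γ Γ' : Type*} [Field E] [Field F] [Field F']
    [AddCommGroup Γ] [LinearOrder Γ] [IsOrderedAddMonoid Γ] [AddCommGroup Γ'] [LinearOrder Γ'] [IsOrderedAddMonoid Γ']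
    (v : F → WithTop Γ) (v' : F' → WithTop Γ')
    (φ : E →+* F) (φ' : E →+* F') (s : F → F) (s' : F' → F')
    (A : Subfield F) (A' : Subfield F') (a : F) (b : F') (g : A →+* F') : Prop :=
  IsDiffIsoOver φ φ' s s' A A' a b g ∧
  ∀ x y : A, v (x : F) ≤ v (y : F) ↔ v' (g x) ≤ v' (g y)

/-- The `D`-transform substitution: `F(x₀,…,xₙ) ↦ F(W₀(y), …, Wₙ(y))` where
`W_j(y) = y₀^{p^j} + p y₁^{p^{j-1}} + ⋯ + p^j y_j`. -/
noncomputable def Dtransform (p : ℕ) {R : Type*} [CommSemiring R] {n : ℕ}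
    (F : MvPolynomial (Fin (n + 1)) R) : MvPolynomial (Fin (n + 1)) R :=
  MvPolynomial.bind₁ (fun j : Fin (n + 1) =>
    ∑ i : Fin (n + 1), if (i : ℕ) ≤ (j : ℕ) then
      MvPolynomial.C ((p : R) ^ (i : ℕ)) * MvPolynomial.X i ^ p ^ ((j : ℕ) - (i : ℕ))
    else 0) F

/-- The initial segment of the ordinals below `lam`, used as a well-ordered
index set. -/
abbrev OrdSeg (lam : Ordinal.{0}) : Type 1 := {o : Ordinal.{0} // o < lam}

/-!
Put `g(x) = G(a)⁻¹ G(a + d x)` with `v(d) = γ`. By Taylor's formula its coefficients are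
`G(a)⁻¹ G_(j)(a) d^j` (with `d^j = ∏ σⁱ(d)^{jᵢ}`): the constant one is `1`, and the
hensel-configuration conditions put the others in `O`, those with `|j| > 1` in `m`, and make a
linear one a unit. Hence `g` reduces to `1 + Σ αᵢ σ̄ⁱ(x)` with some `αᵢ ≠ 0`.
Axiom 4 gives a nonzero root of this reduction; `g` is σ-henselian at any lift `u` of it, and the
resulting root `w` of `g` satisfies `v(w) = v(u) = 0`. Then `b = a + d w` is a root of `G` with
`v(a - b) = γ`.
-/

lemma degSum_eq_degree {n : ℕ} (d : Fin (n + 1) →₀ ℕ) : degSum d = d.degree := rfl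

lemma degSum_le_one_iff {n : ℕ} {d : Fin (n + 1) →₀ ℕ} :
    degSum d ≤ 1 ↔ d = 0 ∨ ∃ i, d = Finsupp.single i 1 := by
  constructor
  · intro h
    rcases Nat.le_one_iff_eq_zero_or_eq_one.1 h with h0 | h1
    · exact Or.inl ((Finsupp.degree_eq_zero_iff d).1 h0)
    · obtain ⟨i, hi⟩ := Multiset.card_eq_one.1 ((Finsupp.card_toMultiset d).trans h1)
      classical
      exact Or.inr ⟨i, by rw [← Finsupp.toMultiset_toFinsupp d, hi, Multiset.toFinsupp_singleton]⟩
  · rintro (rfl | ⟨i, rfl⟩)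
    · simp [degSum_eq_degree]
    · simp [degSum_eq_degree, Finsupp.degree_single]

lemma sum_eq_add_sum_single_add_sum_filter {n : ℕ} {A : Type*} [AddCommMonoid A]
    (S : Finset (Fin (n + 1) →₀ ℕ)) (t : (Fin (n + 1) →₀ ℕ) → A) (ht : ∀ d ∉ S, t d = 0) :
    ∑ d ∈ S, t d = t 0 + ∑ i, t (Finsupp.single i 1) + ∑ d ∈ S with 1 < degSum d, t d := by
  classical
  rw [← Finset.sum_filter_not_add_sum_filter S (fun d => 1 < degSum d)]
  congr 1
  have hsingle : (0 : Fin (n + 1) →₀ ℕ) ∉ Finset.univ.image fun i => Finsupp.single i 1 := by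
    simp [Finsupp.single_eq_zero]
  rw [← Finset.sum_image (fun i _ j _ h => Finsupp.single_left_injective one_ne_zero h),
    ← Finset.sum_insert hsingle]
  refine Finset.sum_subset (fun d hd => ?_) (fun d hd' hd => ht d fun hS => hd ?_)
  · rcases degSum_le_one_iff.1 (not_lt.1 (Finset.mem_filter.1 hd).2) with rfl | ⟨i, rfl⟩ <;> simp
  · refine Finset.mem_filter.2 ⟨hS, not_lt.2 (degSum_le_one_iff.2 ?_)⟩
    simpa [eq_comm] using hd'

section Taylor

variable {R : Type*} [CommRing R]

lemma prod_choose_eq_zero {ι : Type*} [Fintype ι] {d j : ι →₀ ℕ} (h : ¬ j ≤ d) :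
    ∏ i, ((d i).choose (j i) : R) = 0 := by
  obtain ⟨i, hi⟩ := not_forall.1 (Finsupp.le_def.not.1 h)
  exact Finset.prod_eq_zero (Finset.mem_univ i) (by simp [Nat.choose_eq_zero_of_lt (not_le.1 hi)])

lemma prod_add_pow_eq_sum_Iic {ι : Type*} [Fintype ι] [DecidableEq ι] (x y : ι → R)
    (d : ι →₀ ℕ) :
    ∏ i, (x i + y i) ^ d i =
      ∑ j ∈ Finset.Iic d,
        (∏ i, ((d i).choose (j i) : R)) * (∏ i, x i ^ (d i - j i)) * ∏ i, y i ^ j i := by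
  calc ∏ i, (x i + y i) ^ d i
      = ∏ i, ∑ m ∈ Finset.range (d i + 1), y i ^ m * x i ^ (d i - m) * ((d i).choose m : R) :=
        Finset.prod_congr rfl fun i _ => by rw [add_comm, add_pow]
    _ = ∑ p ∈ Fintype.piFinset fun i => Finset.range (d i + 1),
          ∏ i, y i ^ p i * x i ^ (d i - p i) * ((d i).choose (p i) : R) :=
        Finset.prod_univ_sum _ _
    _ = _ := by
        refine Finset.sum_nbij' Finsupp.equivFunOnFinite.symm (⇑) (fun p hp => ?_)
          (fun j hj => ?_) (fun p _ => rfl) (fun j _ => by simp) (fun p _ => ?_)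
        · simpa [Finsupp.le_def, Nat.lt_succ_iff] using hp
        · simpa [Finsupp.le_def, Nat.lt_succ_iff] using hj
        · simp only [Finsupp.equivFunOnFinite_symm_apply_apply, Finset.prod_mul_distrib]
          ring

variable {n : ℕ}

lemma eval_taylorCoeff (e : Fin (n + 1) →₀ ℕ) (f : MvPolynomial (Fin (n + 1)) R)
    (x : Fin (n + 1) → R) :
    MvPolynomial.eval x (taylorCoeff e f) =
      ∑ d ∈ f.support, (∏ i, ((d i).choose (e i) : R)) * f.coeff d * ∏ i, x i ^ (d i - e i) := by
  unfold taylorCoeff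
  rw [map_sum]
  refine Finset.sum_congr rfl fun d _ => ?_
  rw [MvPolynomial.eval_monomial, Finsupp.prod_pow,
    Finset.prod_subset (Finset.subset_univ _) fun i _ hi => ?_]
  · simp [Finsupp.tsub_apply]
  · simp only [Finset.mem_union, Finsupp.mem_support_iff, not_or, not_not] at hi
    simp [hi.1, hi.2]

lemma eval_add_eq_sum_taylorCoeff (f : MvPolynomial (Fin (n + 1)) R) (x y : Fin (n + 1) → R) :
    MvPolynomial.eval (fun i => x i + y i) f =
      ∑ j ∈ f.support.biUnion Finset.Iic,
        MvPolynomial.eval x (taylorCoeff j f) * ∏ i, y i ^ j i := by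
  simp only [eval_taylorCoeff, Finset.sum_mul]
  rw [MvPolynomial.eval_eq', Finset.sum_comm]
  refine Finset.sum_congr rfl fun d hd => ?_
  rw [prod_add_pow_eq_sum_Iic, Finset.mul_sum]
  refine Finset.sum_subset (fun j hj => Finset.mem_biUnion.2 ⟨d, hd, hj⟩) (fun j _ hj => ?_)
    |>.trans (Finset.sum_congr rfl fun j _ => by ring)
  rw [prod_choose_eq_zero (Finset.mem_Iic.not.1 hj)]
  ring

end Taylor

section DiffPoly

variable {R : Type*} [CommRing R] {n : ℕ}

def diffPow (s : R → R) (j : Fin (n + 1) →₀ ℕ) (c : R) : R := ∏ i : Fin (n + 1), s^[i] c ^ j i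

lemma diffPow_zero (s : R → R) (c : R) : diffPow s (0 : Fin (n + 1) →₀ ℕ) c = 1 := by
  simp [diffPow]

lemma diffPow_single (s : R → R) (i : Fin (n + 1)) (c : R) :
    diffPow s (Finsupp.single i 1) c = s^[i] c := by
  rw [diffPow, Finset.prod_eq_single i (fun l _ hl => by simp [Finsupp.single_eq_of_ne hl])
    (by simp)]
  simp

lemma diffPow_mul {F : Type*} [FunLike F R R] [MulHomClass F R R] (s : F)
    (j : Fin (n + 1) →₀ ℕ) (c c' : R) :
    diffPow s j (c * c') = diffPow s j c * diffPow s j c' := by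
  simp only [diffPow, iterate_map_mul, mul_pow, Finset.prod_mul_distrib]

lemma evalDiff_eq_sum (s : R → R) (f : MvPolynomial (Fin (n + 1)) R) (c : R) :
    evalDiff s f c = ∑ d ∈ f.support, f.coeff d * diffPow s d c :=
  MvPolynomial.eval_eq' _ _

lemma evalDiff_sum_monomial (s : R → R) (S : Finset (Fin (n + 1) →₀ ℕ))
    (b : (Fin (n + 1) →₀ ℕ) → R) (c : R) :
    evalDiff s (∑ j ∈ S, MvPolynomial.monomial j (b j)) c = ∑ j ∈ S, b j * diffPow s j c := by
  simp only [evalDiff, map_sum, MvPolynomial.eval_monomial, Finsupp.prod_pow, diffPow]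

lemma taylorCoeff_zero (f : MvPolynomial (Fin (n + 1)) R) : taylorCoeff 0 f = f := by
  conv_rhs => rw [← MvPolynomial.support_sum_monomial_coeff f]
  exact Finset.sum_congr rfl fun d _ => by simp

lemma evalDiff_taylorCoeff_eq_zero (s : R → R) (f : MvPolynomial (Fin (n + 1)) R) (c : R)
    {j : Fin (n + 1) →₀ ℕ} (hj : j ∉ f.support.biUnion Finset.Iic) :
    evalDiff s (taylorCoeff j f) c = 0 := by
  refine (eval_taylorCoeff j f _).trans (Finset.sum_eq_zero fun d hd => ?_)
  rw [prod_choose_eq_zero fun hjd => hj (Finset.mem_biUnion.2 ⟨d, hd, Finset.mem_Iic.2 hjd⟩)]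
  ring

lemma evalDiff_taylorCoeff_single (s : R → R) (f : MvPolynomial (Fin (n + 1)) R)
    (i : Fin (n + 1)) (c : R) :
    evalDiff s (taylorCoeff (Finsupp.single i 1) f) c =
      ∑ d ∈ f.support, (d i : R) * f.coeff d * diffPow s (d - Finsupp.single i 1) c := by
  refine (eval_taylorCoeff _ f _).trans (Finset.sum_congr rfl fun d _ => ?_)
  rw [Finset.prod_eq_single i (fun l _ hl => by simp [Finsupp.single_eq_of_ne hl]) (by simp)]
  simp [diffPow, Finsupp.tsub_apply]

lemma evalDiff_eq_add_sum_filter (s : R → R) (f : MvPolynomial (Fin (n + 1)) R) (c : R) :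
    evalDiff s f c = (f.coeff 0 + ∑ i, f.coeff (Finsupp.single i 1) * s^[i] c) +
      ∑ d ∈ f.support with 1 < degSum d, f.coeff d * diffPow s d c := by
  rw [evalDiff_eq_sum, sum_eq_add_sum_single_add_sum_filter _ _
    fun d hd => by rw [MvPolynomial.notMem_support_iff.1 hd, zero_mul]]
  simp [diffPow_zero, diffPow_single]

lemma evalDiff_taylorCoeff_single_eq_add_sum_filter (s : R → R)
    (f : MvPolynomial (Fin (n + 1)) R) (i : Fin (n + 1)) (c : R) :
    evalDiff s (taylorCoeff (Finsupp.single i 1) f) c = f.coeff (Finsupp.single i 1) +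
      ∑ d ∈ f.support with 1 < degSum d,
        f.coeff d * ((d i : R) * diffPow s (d - Finsupp.single i 1) c) := by
  rw [evalDiff_taylorCoeff_single, sum_eq_add_sum_single_add_sum_filter _ _
    fun d hd => by rw [MvPolynomial.notMem_support_iff.1 hd, mul_zero, zero_mul],
    Finset.sum_eq_single i (fun l _ hl => by simp [Finsupp.single_eq_of_ne' hl]) (by simp)]
  simp only [Finsupp.coe_zero, Pi.zero_apply, Nat.cast_zero, zero_mul, zero_add,
    Finsupp.single_eq_same, Nat.cast_one, one_mul, tsub_self, diffPow_zero, mul_one]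
  exact congrArg _ (Finset.sum_congr rfl fun d _ => by ring)

lemma evalDiff_add_eq_sum_taylorCoeff {F : Type*} [FunLike F R R] [AddMonoidHomClass F R R]
    (s : F) (f : MvPolynomial (Fin (n + 1)) R) (a c : R) :
    evalDiff s f (a + c) =
      ∑ j ∈ f.support.biUnion Finset.Iic, evalDiff s (taylorCoeff j f) a * diffPow s j c := by
  simp only [evalDiff, iterate_map_add]
  exact eval_add_eq_sum_taylorCoeff f _ _

lemma evalDiff_smul (s : R → R) (c : R)
    (f : MvPolynomial (Fin (n + 1)) R) (x : R) :
    evalDiff s (c • f) x = c * evalDiff s f x :=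
  MvPolynomial.smul_eval _ _ _

/-- The σ-polynomial `G(a + d x)`, read off from the Taylor expansion of `G` at `a`. -/
noncomputable def affineSubst (s : R → R) (f : MvPolynomial (Fin (n + 1)) R) (a d : R) :
    MvPolynomial (Fin (n + 1)) R :=
  ∑ j ∈ f.support.biUnion Finset.Iic,
    MvPolynomial.monomial j (evalDiff s (taylorCoeff j f) a * diffPow s j d)

lemma coeff_affineSubst (s : R → R) (f : MvPolynomial (Fin (n + 1)) R) (a d : R)
    (j : Fin (n + 1) →₀ ℕ) :
    (affineSubst s f a d).coeff j = evalDiff s (taylorCoeff j f) a * diffPow s j d := by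
  classical
  simp only [affineSubst, MvPolynomial.coeff_sum, MvPolynomial.coeff_monomial,
    Finset.sum_ite_eq']
  split_ifs with hj
  · rfl
  · rw [evalDiff_taylorCoeff_eq_zero s f a hj, zero_mul]

lemma evalDiff_affineSubst {F : Type*} [FunLike F R R] [RingHomClass F R R] (s : F)
    (f : MvPolynomial (Fin (n + 1)) R) (a d x : R) :
    evalDiff s (affineSubst s f a d) x = evalDiff s f (a + d * x) := by
  rw [affineSubst, evalDiff_sum_monomial, evalDiff_add_eq_sum_taylorCoeff]
  simp only [diffPow_mul, mul_assoc]

end DiffPoly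

namespace ValuedField

variable {K : Type u} {Γ : Type v} {k : Type w}
  [Field K] [AddCommGroup Γ] [LinearOrder Γ] [IsOrderedAddMonoid Γ] [Field k]
  (M : ValuedField K Γ k)

lemma v_zero : M.v 0 = ⊤ := (M.v_top_iff 0).2 rfl

lemma v_one : M.v 1 = 0 := by
  have hne : M.v 1 ≠ ⊤ := fun h => one_ne_zero ((M.v_top_iff 1).1 h)
  have h := M.v_mul 1 1
  rw [mul_one] at h
  lift M.v 1 to Γ using hne with g
  exact_mod_cast left_eq_add.mp (WithTop.coe_injective (h.trans (WithTop.coe_add g g).symm))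

def addVal : AddValuation K (WithTop Γ) := AddValuation.of M.v M.v_zero M.v_one M.v_add M.v_mul

lemma v_neg (a : K) : M.v (-a) = M.v a := M.addVal.map_neg a

lemma v_pow (a : K) (m : ℕ) : M.v (a ^ m) = m • M.v a := M.addVal.map_pow a m

lemma v_add_eq_of_lt {a b : K} (h : M.v a < M.v b) : M.v (a + b) = M.v a :=
  M.addVal.map_add_eq_of_lt_left h

lemma le_v_sum {ι : Type*} {s : Finset ι} {g : ι → K} {c : WithTop Γ}
    (h : ∀ i ∈ s, c ≤ M.v (g i)) : c ≤ M.v (∑ i ∈ s, g i) :=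
  M.addVal.map_le_sum h

lemma pos_v_sum {ι : Type*} {s : Finset ι} {g : ι → K}
    (h : ∀ i ∈ s, 0 < M.v (g i)) : 0 < M.v (∑ i ∈ s, g i) :=
  M.addVal.map_lt_sum WithTop.zero_ne_top h

lemma v_prod {ι : Type*} (s : Finset ι) (g : ι → K) :
    M.v (∏ i ∈ s, g i) = ∑ i ∈ s, M.v (g i) := by
  classical
  induction s using Finset.induction_on with
  | empty => simp [v_one]
  | insert i s his ih => rw [Finset.prod_insert his, Finset.sum_insert his, M.v_mul, ih]

lemma v_natCast_nonneg (m : ℕ) : 0 ≤ M.v (m : K) := by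
  induction m with
  | zero => simp [v_zero]
  | succ m ih =>
    push_cast
    exact M.addVal.map_le_add ih M.v_one.ge

lemma π_zero : M.π 0 = 0 := by
  have h0 : 0 ≤ M.v 0 := by simp [v_zero]
  simpa using M.π_add 0 0 h0 h0

lemma π_sum {ι : Type*} (s : Finset ι) (g : ι → K) (h : ∀ i ∈ s, 0 ≤ M.v (g i)) :
    M.π (∑ i ∈ s, g i) = ∑ i ∈ s, M.π (g i) := by
  classical
  induction s using Finset.induction_on with
  | empty => simpa using M.π_zero
  | insert i s his ih =>
    simp only [Finset.forall_mem_insert] at h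
    rw [Finset.sum_insert his, Finset.sum_insert his,
      M.π_add _ _ h.1 (M.le_v_sum h.2), ih h.2]

lemma v_eq_zero_iff_π_ne_zero {a : K} : M.v a = 0 ↔ M.π a ≠ 0 := by
  constructor
  · intro h hπ
    exact (lt_irrefl (0 : WithTop Γ)) (h ▸ (M.π_eq_zero_iff a h.ge).1 hπ)
  · intro hπ
    have hnn : 0 ≤ M.v a := by
      by_contra h
      exact hπ (M.π_junk a h)
    exact le_antisymm (not_lt.1 fun h => hπ ((M.π_eq_zero_iff a hnn).2 h)) hnn

end ValuedField

namespace ValuedDiffField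

variable {K : Type u} {Γ : Type v} {k : Type w}
  [Field K] [AddCommGroup Γ] [LinearOrder Γ] [IsOrderedAddMonoid Γ] [Field k]
  (M : ValuedDiffField K Γ k) {n : ℕ}

lemma v_σ_iterate (a : K) (m : ℕ) : M.v ((⇑M.σ)^[m] a) = M.v a := by
  induction m with
  | zero => rfl
  | succ m ih => rw [Function.iterate_succ_apply', M.v_σ, ih]

lemma π_σ_iterate (a : K) (m : ℕ) : M.π ((⇑M.σ)^[m] a) = (⇑M.σr)^[m] (M.π a) := by
  induction m with
  | zero => rfl
  | succ m ih => rw [Function.iterate_succ_apply', Function.iterate_succ_apply', M.π_σ, ih]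

lemma v_diffPow (j : Fin (n + 1) →₀ ℕ) (c : K) :
    M.v (diffPow M.σ j c) = degSum j • M.v c := by
  simp only [diffPow, M.v_prod, M.v_pow, M.v_σ_iterate]
  rw [degSum_eq_degree, Finsupp.degree_eq_sum, Finset.sum_smul]

lemma v_diffPow_nonneg (j : Fin (n + 1) →₀ ℕ) {c : K} (hc : 0 ≤ M.v c) :
    0 ≤ M.v (diffPow M.σ j c) :=
  (M.v_diffPow j c).symm ▸ nsmul_nonneg hc _

end ValuedDiffField

section ResiduallyLinear

variable {K : Type u} {Γ : Type v} {k : Type w}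
  [Field K] [AddCommGroup Γ] [LinearOrder Γ] [IsOrderedAddMonoid Γ] [Field k]

/-- `g` has coefficients in `O` and reduces modulo `m` to `1 + Σ αᵢ σ̄ⁱ(x)` with some `αᵢ ≠ 0`. -/
structure IsResiduallyLinear (M : ValuedDiffField K Γ k) {n : ℕ}
    (g : MvPolynomial (Fin (n + 1)) K) : Prop where
  coeffsInO : CoeffsInO M.toValuedField g
  coeff_zero : g.coeff 0 = 1
  coeff_pos : ∀ d, 1 < degSum d → 0 < M.v (g.coeff d)
  exists_v_coeff_single : ∃ i, M.v (g.coeff (Finsupp.single i 1)) = 0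

namespace IsResiduallyLinear

variable {M : ValuedDiffField K Γ k} {n : ℕ} {g : MvPolynomial (Fin (n + 1)) K}

lemma v_sum_higher_pos (hg : IsResiduallyLinear M g) (S : Finset (Fin (n + 1) →₀ ℕ))
    {e : (Fin (n + 1) →₀ ℕ) → K} (he : ∀ d, 0 ≤ M.v (e d)) :
    0 < M.v (∑ d ∈ S with 1 < degSum d, g.coeff d * e d) :=
  M.pos_v_sum fun d hd => by
    rw [M.v_mul]
    exact (hg.coeff_pos d (Finset.mem_filter.1 hd).2).trans_le (le_add_of_nonneg_right (he d))

lemma v_evalDiff_pos (hg : IsResiduallyLinear M g) {u : K} (hu : 0 ≤ M.v u)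
    (hres : 1 + ∑ i, M.π (g.coeff (Finsupp.single i 1)) * (⇑M.σr)^[i] (M.π u) = 0) :
    0 < M.v (evalDiff M.σ g u) := by
  have hterm : ∀ i : Fin (n + 1), 0 ≤ M.v (g.coeff (Finsupp.single i 1) * (⇑M.σ)^[i] u) :=
    fun i => by rw [M.v_mul, M.v_σ_iterate]; exact add_nonneg (hg.coeffsInO _) hu
  have hlin : 0 ≤ M.v (∑ i, g.coeff (Finsupp.single i 1) * (⇑M.σ)^[i] u) :=
    M.le_v_sum fun i _ => hterm i
  have hlin_pos : 0 < M.v (1 + ∑ i, g.coeff (Finsupp.single i 1) * (⇑M.σ)^[i] u) := by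
    refine (M.π_eq_zero_iff _ (M.addVal.map_le_add M.v_one.ge hlin)).1 ?_
    rw [M.π_add _ _ M.v_one.ge hlin, M.π_one, M.π_sum _ _ fun i _ => hterm i, ← hres]
    refine congrArg _ (Finset.sum_congr rfl fun i _ => ?_)
    rw [M.π_mul _ _ (hg.coeffsInO _) (by rwa [M.v_σ_iterate]), M.π_σ_iterate]
  rw [evalDiff_eq_add_sum_filter, hg.coeff_zero]
  exact M.addVal.map_lt_add hlin_pos
    (hg.v_sum_higher_pos _ fun d => M.v_diffPow_nonneg d hu)

lemma vG1min_eq_zero (hg : IsResiduallyLinear M g) {u : K} (hu : 0 ≤ M.v u) :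
    vG1min M g u = 0 := by
  have hrest : ∀ i : Fin (n + 1), 0 < M.v (∑ d ∈ g.support with 1 < degSum d,
      g.coeff d * ((d i : K) * diffPow M.σ (d - Finsupp.single i 1) u)) := fun i =>
    hg.v_sum_higher_pos _ fun d => by
      rw [M.v_mul]
      exact add_nonneg (M.v_natCast_nonneg _) (M.v_diffPow_nonneg _ hu)
  obtain ⟨i₀, hi₀⟩ := hg.exists_v_coeff_single
  refine le_antisymm ?_ (Finset.le_inf fun i _ => ?_)
  · refine (Finset.inf_le (Finset.mem_univ i₀)).trans (le_of_eq ?_)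
    rw [evalDiff_taylorCoeff_single_eq_add_sum_filter, M.v_add_eq_of_lt (hi₀ ▸ hrest i₀), hi₀]
  · rw [evalDiff_taylorCoeff_single_eq_add_sum_filter]
    exact M.addVal.map_le_add (hg.coeffsInO _) (hrest i).le

/-- Axiom 4 solves the residue equation, and σ-henselianity lifts its solution. -/
theorem exists_root (hg : IsResiduallyLinear M g) (h4 : Axiom4n M n)
    (hσh : SigmaHenselian M) : ∃ w, evalDiff M.σ g w = 0 ∧ M.v w = 0 := by
  obtain ⟨i₀, hi₀⟩ := hg.exists_v_coeff_single
  obtain ⟨y, hy⟩ := h4 (fun i => M.π (g.coeff (Finsupp.single i 1)))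
    ⟨i₀, M.v_eq_zero_iff_π_ne_zero.1 hi₀⟩
  have hy₀ : y ≠ 0 := by
    rintro rfl
    simp [Function.iterate_fixed (map_zero M.σr)] at hy
  obtain ⟨u, rfl⟩ := M.π_surj y
  have hu : M.v u = 0 := M.v_eq_zero_iff_π_ne_zero.2 hy₀
  have hgu := hg.v_evalDiff_pos hu.ge hy
  obtain ⟨w, hw, hvuw⟩ := hσh n g hg.coeffsInO u hu.ge ⟨hgu, hg.vG1min_eq_zero hu.ge⟩
  refine ⟨w, hw, ?_⟩
  have hlt : M.v u < M.v (w - u) := by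
    rw [hu, ← M.v_neg, neg_sub]
    exact hgu.trans_le hvuw
  rw [← add_sub_cancel u w, M.v_add_eq_of_lt hlt, hu]

end IsResiduallyLinear

end ResiduallyLinear

section HenselConfig

variable {K : Type u} {Γ : Type v} {k : Type w}
  [Field K] [AddCommGroup Γ] [LinearOrder Γ] [IsOrderedAddMonoid Γ] [Field k]
  (M : ValuedDiffField K Γ k) {n : ℕ} (f : MvPolynomial (Fin (n + 1)) K) {a d : K}

lemma v_coeff_smul_affineSubst_add {γ : Γ} (hA : evalDiff M.σ f a ≠ 0) (hd : M.v d = γ)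
    (j : Fin (n + 1) →₀ ℕ) :
    M.v (((evalDiff M.σ f a)⁻¹ • affineSubst M.σ f a d).coeff j) + M.v (evalDiff M.σ f a) =
      M.v (evalDiff M.σ (taylorCoeff j f) a) + degSum j • (γ : WithTop Γ) := by
  rw [MvPolynomial.coeff_smul, smul_eq_mul, coeff_affineSubst, ← M.v_mul,
    mul_comm, mul_inv_cancel_left₀ hA, M.v_mul, M.v_diffPow, hd]

theorem isResiduallyLinear_of_henselConfig {γ : Γ} (hA : evalDiff M.σ f a ≠ 0)
    (hγ : M.v (evalDiff M.σ f a) = vG1min M f a + γ)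
    (hγj : ∀ j, 1 < degSum j → M.v (evalDiff M.σ f a) <
      M.v (evalDiff M.σ (taylorCoeff j f) a) + degSum j • (γ : WithTop Γ))
    (hd : M.v d = γ) :
    IsResiduallyLinear M ((evalDiff M.σ f a)⁻¹ • affineSubst M.σ f a d) := by
  have hAtop : M.v (evalDiff M.σ f a) ≠ ⊤ := fun h => hA ((M.v_top_iff _).1 h)
  have key := v_coeff_smul_affineSubst_add M f hA hd
  have hsingle : ∀ i, vG1min M f a + γ ≤ M.v (evalDiff M.σ (taylorCoeff
      (Finsupp.single i 1) f) a) + degSum (Finsupp.single i 1) • (γ : WithTop Γ) := fun i => by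
    rw [degSum_eq_degree, Finsupp.degree_single, one_nsmul]
    exact add_le_add_left (Finset.inf_le (Finset.mem_univ i)) _
  have hzero : ((evalDiff M.σ f a)⁻¹ • affineSubst M.σ f a d).coeff 0 = 1 := by
    rw [MvPolynomial.coeff_smul, coeff_affineSubst, taylorCoeff_zero, diffPow_zero, mul_one,
      smul_eq_mul, inv_mul_cancel₀ hA]
  have hpos : ∀ j, 1 < degSum j →
      0 < M.v (((evalDiff M.σ f a)⁻¹ • affineSubst M.σ f a d).coeff j) := fun j hj =>
    (WithTop.add_lt_add_iff_right hAtop).1 (by rw [zero_add, key]; exact hγj j hj)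
  refine ⟨fun j => ?_, hzero, hpos, ?_⟩
  · rcases le_or_gt (degSum j) 1 with hj | hj
    · rcases degSum_le_one_iff.1 hj with rfl | ⟨i, rfl⟩
      · rw [hzero, M.v_one]
      · exact (WithTop.add_le_add_iff_right hAtop).1 (by rw [zero_add, key, hγ]; exact hsingle i)
    · exact (hpos j hj).le
  · obtain ⟨i₀, -, hi₀⟩ := Finset.exists_mem_eq_inf Finset.univ Finset.univ_nonempty
      fun i => M.v (evalDiff M.σ (taylorCoeff (Finsupp.single i 1) f) a)
    refine ⟨i₀, WithTop.add_right_cancel hAtop ?_⟩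
    rw [zero_add, key, degSum_eq_degree, Finsupp.degree_single, one_nsmul, hγ]
    exact congrArg (· + _) hi₀.symm

end HenselConfig

/-- Lemma 5.10 ("hensel-conf"): in a σ-henselian valued difference field with
Axiom 4, every `(G, a)` in σ-hensel configuration has a zero `b` of `G` with
`v(a - b) = γ(G, a)`, i.e. `v(a - b) + min_{|i|=1} v(G_(i)(a)) = v(G(a))`. -/
theorem stmt13 {K : Type u} {Γ : Type v} {k : Type w}
    [Field K] [AddCommGroup Γ] [LinearOrder Γ] [IsOrderedAddMonoid Γ] [Field k]
    (M : ValuedDiffField K Γ k) (h4 : Axiom4 M) (hσh : SigmaHenselian M)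
    (n : ℕ) (f : MvPolynomial (Fin (n + 1)) K) (a : K)
    (hc : HenselConfig M f a) :
    ∃ b : K, evalDiff (⇑M.σ) f b = 0 ∧
      M.v (a - b) + vG1min M f a = M.v (evalDiff (⇑M.σ) f a) := by
  by_cases hA : evalDiff (⇑M.σ) f a = 0
  · exact ⟨a, hA, by rw [sub_self, hA, M.v_zero, WithTop.top_add]⟩
  obtain ⟨γ, hγ, hγj⟩ := hc.2.resolve_left hA
  obtain ⟨d, hd⟩ := M.v_surj γ
  obtain ⟨w, hw, hvw⟩ :=
    (isResiduallyLinear_of_henselConfig M f hA hγ hγj hd).exists_root (h4 n) hσh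
  rw [evalDiff_smul, evalDiff_affineSubst] at hw
  refine ⟨a + d * w, (mul_eq_zero.1 hw).resolve_left (inv_ne_zero hA), ?_⟩
  rw [sub_add_cancel_left, M.v_neg, M.v_mul, hd, hvw, add_zero, add_comm, hγ]

end VDFPaper
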